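/- arXiv:2105.13205 — 8 statements merged into one kernel-verified Lean document; each statement's English description precedes it below -/
import Mathlib

section
/- Let T > 0, let J ∈ ℝ^{n×n} be skew-symmetric, and let K : [0,T] → ℝ^{m×n} and D : [0,T] → ℝ^{m×m} be matrix-valued functions such that D(t) is symmetric for every t ∈ [0,T]. Suppose Φ : [0,T] → ℝ^{n×n} is differentiable, Φ(0) = I_n, and Φ'(t) = K(t)ᵀ D(t) K(t) Jᵀ Φ(t) for all t ∈ [0,T]. Then Φ(t)ᵀ J Φ(t) = J for all t ∈ [0,T], i.e. Φ(t) is symplectic with respect to J. -/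
open Matrix
open scoped Matrix.Norms.L2Operator

/-!
The derivative of `t ↦ Φᵀ J Φ` along `Φ' = A Φ` is `Φᵀ (Aᵀ J + J A) Φ`, and for
`A = Kᵀ D K Jᵀ` with `D` symmetric and `J` skew-symmetric, `Aᵀ J + J A = J S J - J S J = 0`
where `S = Kᵀ D K`. Hence `Φᵀ J Φ` is constant, equal to its value `J` at `t = 0`.
-/

namespace Matrix

variable {ι κ α : Type*}

/-- `A` lies in the Lie algebra of the group of matrices symplectic with respect to `J`. -/
def IsHamiltonian [Fintype ι] [CommRing α] (J A : Matrix ι ι α) : Prop :=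
  Aᵀ * J + J * A = 0

section Algebra

variable [CommRing α]

theorem IsSymm.transpose_mul_mul [Fintype κ] {D : Matrix κ κ α} (hD : D.IsSymm)
    (K : Matrix κ ι α) : (Kᵀ * D * K).IsSymm := by
  simp only [IsSymm, transpose_mul, transpose_transpose, hD.eq, Matrix.mul_assoc]

variable [Fintype ι]

theorem IsSymm.isHamiltonian_mul_transpose {J S : Matrix ι ι α} (hS : S.IsSymm) (hJ : Jᵀ = -J) :
    IsHamiltonian J (S * Jᵀ) := by
  rw [IsHamiltonian, transpose_mul, transpose_transpose, hS.eq, hJ, Matrix.mul_neg,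
    Matrix.mul_assoc, Matrix.mul_neg, add_neg_cancel]

theorem IsHamiltonian.transpose_mul_mul_add_eq_zero {J A : Matrix ι ι α} (hA : IsHamiltonian J A)
    (Φ : Matrix ι ι α) : (A * Φ)ᵀ * J * Φ + Φᵀ * J * (A * Φ) = 0 := by
  calc (A * Φ)ᵀ * J * Φ + Φᵀ * J * (A * Φ) = Φᵀ * (Aᵀ * J + J * A) * Φ := by
        simp only [transpose_mul, Matrix.mul_add, Matrix.add_mul, Matrix.mul_assoc]
    _ = 0 := by rw [hA, Matrix.mul_zero, Matrix.zero_mul]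

end Algebra

variable [Fintype ι] [DecidableEq ι]

theorem _root_.HasDerivWithinAt.matrix_transpose_mul_mul {Φ : ℝ → Matrix ι ι ℝ}
    {Φ' : Matrix ι ι ℝ} {s : Set ℝ} {t : ℝ} (hΦ : HasDerivWithinAt Φ Φ' s t) (J : Matrix ι ι ℝ) :
    HasDerivWithinAt (fun s ↦ (Φ s)ᵀ * J * Φ s) (Φ'ᵀ * J * Φ t + (Φ t)ᵀ * J * Φ') s t := by
  have hΦT : HasDerivWithinAt (fun s ↦ (Φ s)ᵀ) Φ'ᵀ s t :=
    (transposeLinearEquiv ι ι ℝ ℝ).toLinearMap.toContinuousLinearMap.hasFDerivAt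
      |>.comp_hasDerivWithinAt t hΦ
  exact (hΦT.mul_const J).mul hΦ

theorem transpose_mul_mul_eq_of_hasDerivWithinAt {a b : ℝ} {J : Matrix ι ι ℝ}
    {A Φ : ℝ → Matrix ι ι ℝ} (hA : ∀ t ∈ Set.Ico a b, IsHamiltonian J (A t))
    (hΦ : ∀ t ∈ Set.Icc a b, HasDerivWithinAt Φ (A t * Φ t) (Set.Icc a b) t) :
    ∀ t ∈ Set.Icc a b, (Φ t)ᵀ * J * Φ t = (Φ a)ᵀ * J * Φ a := by
  refine constant_of_has_deriv_right_zero (fun t ht ↦ ?_) fun t ht ↦ ?_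
  · exact ((hΦ t ht).matrix_transpose_mul_mul J).continuousWithinAt
  · have hΦt := (hΦ t (Set.mem_Icc_of_Ico ht)).mono_of_mem_nhdsWithin (Icc_mem_nhdsGE_of_mem ht)
    simpa only [(hA t ht).transpose_mul_mul_add_eq_zero] using hΦt.matrix_transpose_mul_mul J

end Matrix

theorem stmt_2_general {n m : ℕ} (T : ℝ)
    (J : Matrix (Fin n) (Fin n) ℝ) (hJ : Jᵀ = -J)
    (K : ℝ → Matrix (Fin m) (Fin n) ℝ) (D : ℝ → Matrix (Fin m) (Fin m) ℝ)
    (hD : ∀ t ∈ Set.Icc (0 : ℝ) T, (D t)ᵀ = D t)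
    (Φ : ℝ → Matrix (Fin n) (Fin n) ℝ)
    (hΦ0 : Φ 0 = 1)
    (hΦ : ∀ t ∈ Set.Icc (0 : ℝ) T,
      HasDerivWithinAt Φ ((K t)ᵀ * D t * K t * Jᵀ * Φ t) (Set.Icc (0 : ℝ) T) t) :
    ∀ t ∈ Set.Icc (0 : ℝ) T, (Φ t)ᵀ * J * Φ t = J := by
  have hHam : ∀ t ∈ Set.Ico (0 : ℝ) T, IsHamiltonian J ((K t)ᵀ * D t * K t * Jᵀ) := fun t ht ↦
    (IsSymm.transpose_mul_mul (hD t (Set.mem_Icc_of_Ico ht)) (K t)).isHamiltonian_mul_transpose hJ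
  intro t ht
  simpa only [hΦ0, transpose_one, Matrix.one_mul, Matrix.mul_one] using
    transpose_mul_mul_eq_of_hasDerivWithinAt hHam hΦ t ht

/-- the backward sensitivity matrix of a continuous-time Hamiltonian DNN
is symplectic with respect to the (constant, skew-symmetric) interconnection matrix `J`. -/
theorem stmt_2 {n m : ℕ} (T : ℝ) (hT : 0 < T)
    (J : Matrix (Fin n) (Fin n) ℝ) (hJ : Jᵀ = -J)
    (K : ℝ → Matrix (Fin m) (Fin n) ℝ) (D : ℝ → Matrix (Fin m) (Fin m) ℝ)
    (hD : ∀ t ∈ Set.Icc (0 : ℝ) T, (D t)ᵀ = D t)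
    (Φ : ℝ → Matrix (Fin n) (Fin n) ℝ)
    (hΦ0 : Φ 0 = 1)
    (hΦ : ∀ t ∈ Set.Icc (0 : ℝ) T,
      HasDerivWithinAt Φ ((K t)ᵀ * D t * K t * Jᵀ * Φ t) (Set.Icc (0 : ℝ) T) t) :
    ∀ t ∈ Set.Icc (0 : ℝ) T, (Φ t)ᵀ * J * Φ t = J :=
  stmt_2_general T J hJ K D hD Φ hΦ0 hΦ
end

section
/- Let T > 0, let J ∈ ℝ^{n×n} be skew-symmetric with J ≠ 0, and let K : [0,T] → ℝ^{m×n} and D : [0,T] → ℝ^{m×m} be matrix-valued functions such that D(t) is symmetric for every t ∈ [0,T]. Suppose Φ : [0,T] → ℝ^{n×n} is differentiable, Φ(0) = I_n, and Φ'(t) = K(t)ᵀ D(t) K(t) Jᵀ Φ(t) for all t ∈ [0,T]. Then for any norm ‖·‖ on real n×n matrices that is sub-multiplicative and transpose-invariant, ‖Φ(t)‖ ≥ 1 for all t ∈ [0,T]. -/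
open Matrix
open scoped Matrix.Norms.L2Operator

/-!
The backward flow `Φ' = S Jᵀ Φ` with `S` symmetric and `J` skew is Hamiltonian, so it preserves
the bilinear form of `J`: `Φ(t)ᵀ J Φ(t) = Φ(0)ᵀ J Φ(0) = J`. For a sub-multiplicative,
transpose-invariant `N` this gives `N J ≤ N(Φ t)² N J`, and `N J > 0` because `J ≠ 0`.
-/

open Set

section Symplectic

variable {A : Type*} [NormedRing A] [NormedAlgebra ℝ A] [StarRing A] [StarModule ℝ A]
  [ContinuousStar A]

theorem hasDerivWithinAt_star_mul_mul_self_zero {J : A} (hJ : star J = -J) {S Φ : ℝ → A}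
    {s : Set ℝ} {t : ℝ} (hS : star (S t) = S t)
    (hΦ : HasDerivWithinAt Φ (S t * star J * Φ t) s t) :
    HasDerivWithinAt (fun x => star (Φ x) * J * Φ x) 0 s t := by
  refine ((hΦ.star.mul_const J).mul hΦ).congr_deriv ?_
  simp only [star_mul, star_star, hS, mul_assoc]
  simp only [hJ, mul_neg, neg_mul, add_neg_cancel]

theorem star_mul_mul_self_eq_of_hasDerivWithinAt {J : A} (hJ : star J = -J) {S Φ : ℝ → A}
    {a b : ℝ} (hS : ∀ t ∈ Icc a b, star (S t) = S t)
    (hΦ : ∀ t ∈ Icc a b, HasDerivWithinAt Φ (S t * star J * Φ t) (Icc a b) t) :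
    ∀ t ∈ Icc a b, star (Φ t) * J * Φ t = star (Φ a) * J * Φ a := by
  have hderiv : ∀ t ∈ Icc a b, HasDerivWithinAt (fun x => star (Φ x) * J * Φ x) 0 (Icc a b) t :=
    fun t ht => hasDerivWithinAt_star_mul_mul_self_zero hJ (hS t ht) (hΦ t ht)
  refine constant_of_has_deriv_right_zero (fun t ht => (hderiv t ht).continuousWithinAt) ?_
  exact fun t ht => (hderiv t (Ico_subset_Icc_self ht)).mono_of_mem_nhdsWithin
    (Icc_mem_nhdsGE_of_mem ⟨ht.1, ht.2⟩)

end Symplectic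

theorem one_le_of_star_mul_mul_self_eq {A : Type*} [Mul A] [Star A] {N : A → ℝ}
    (hN_nonneg : ∀ x, 0 ≤ N x) (hN_mul : ∀ x y, N (x * y) ≤ N x * N y)
    (hN_star : ∀ x, N (star x) = N x) {J x : A} (hJ : 0 < N J) (hx : star x * J * x = J) :
    1 ≤ N x := by
  have hle : N J ≤ N x * N x * N J :=
    calc N J = N (star x * J * x) := by rw [hx]
      _ ≤ N x * N J * N x := by
        grw [hN_mul, hN_mul, hN_star]
        exact hN_nonneg x
      _ = N x * N x * N J := by ring
  have hsq : 1 ≤ N x * N x := le_of_mul_le_mul_right (by rwa [one_mul]) hJ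
  nlinarith [hN_nonneg x]

theorem stmt_4_general {n m : ℕ} (T : ℝ)
    (J : Matrix (Fin n) (Fin n) ℝ) (hJskew : Jᵀ = -J) (hJne : J ≠ 0)
    (K : ℝ → Matrix (Fin m) (Fin n) ℝ) (D : ℝ → Matrix (Fin m) (Fin m) ℝ)
    (hD : ∀ t ∈ Set.Icc (0 : ℝ) T, (D t)ᵀ = D t)
    (Φ : ℝ → Matrix (Fin n) (Fin n) ℝ)
    (hΦ0 : Φ 0 = 1)
    (hΦ : ∀ t ∈ Set.Icc (0 : ℝ) T,
      HasDerivWithinAt Φ ((K t)ᵀ * D t * K t * Jᵀ * Φ t) (Set.Icc (0 : ℝ) T) t)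
    (N : Matrix (Fin n) (Fin n) ℝ → ℝ)
    (hN_nonneg : ∀ A, 0 ≤ N A)
    (hN_def : ∀ A, N A = 0 ↔ A = 0)
    (hN_mul : ∀ A B, N (A * B) ≤ N A * N B)
    (hN_transpose : ∀ A, N Aᵀ = N A) :
    ∀ t ∈ Set.Icc (0 : ℝ) T, 1 ≤ N (Φ t) := by
  have hstar : ∀ B : Matrix (Fin n) (Fin n) ℝ, star B = Bᵀ :=
    conjTranspose_eq_transpose_of_trivial
  have hsymm : ∀ t ∈ Icc (0 : ℝ) T, star ((K t)ᵀ * D t * K t) = (K t)ᵀ * D t * K t := by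
    intro t ht
    rw [hstar, transpose_mul, transpose_mul, transpose_transpose, hD t ht, Matrix.mul_assoc]
  have hpreserve := star_mul_mul_self_eq_of_hasDerivWithinAt (hstar J ▸ hJskew) hsymm
    (fun t ht => hstar J ▸ hΦ t ht)
  have hNJ : 0 < N J := (hN_nonneg J).lt_of_ne' (mt (hN_def J).mp hJne)
  intro t ht
  refine one_le_of_star_mul_mul_self_eq hN_nonneg hN_mul (fun B => by rw [hstar, hN_transpose])
    hNJ ?_
  simpa only [hΦ0, star_one, one_mul, mul_one] using hpreserve t ht

/-- non-vanishing backward sensitivity matrices for continuous-time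
Hamiltonian DNNs: any sub-multiplicative, transpose-invariant norm of `Φ(t)` is at least `1`. -/
theorem stmt_4 {n m : ℕ} (T : ℝ) (hT : 0 < T)
    (J : Matrix (Fin n) (Fin n) ℝ) (hJskew : Jᵀ = -J) (hJne : J ≠ 0)
    (K : ℝ → Matrix (Fin m) (Fin n) ℝ) (D : ℝ → Matrix (Fin m) (Fin m) ℝ)
    (hD : ∀ t ∈ Set.Icc (0 : ℝ) T, (D t)ᵀ = D t)
    (Φ : ℝ → Matrix (Fin n) (Fin n) ℝ)
    (hΦ0 : Φ 0 = 1)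
    (hΦ : ∀ t ∈ Set.Icc (0 : ℝ) T,
      HasDerivWithinAt Φ ((K t)ᵀ * D t * K t * Jᵀ * Φ t) (Set.Icc (0 : ℝ) T) t)
    (N : Matrix (Fin n) (Fin n) ℝ → ℝ)
    (hN_nonneg : ∀ A, 0 ≤ N A)
    (hN_def : ∀ A, N A = 0 ↔ A = 0)
    (hN_add : ∀ A B, N (A + B) ≤ N A + N B)
    (hN_smul : ∀ (c : ℝ) A, N (c • A) = |c| * N A)
    (hN_mul : ∀ A B, N (A * B) ≤ N A * N B)
    (hN_transpose : ∀ A, N Aᵀ = N A) :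
    ∀ t ∈ Set.Icc (0 : ℝ) T, 1 ≤ N (Φ t) :=
  stmt_4_general T J hJskew hJne K D hD Φ hΦ0 hΦ N hN_nonneg hN_def hN_mul hN_transpose
end

section
/- Let ε ∈ ℝ and let J₂ = [[0, −1], [1, 0]] ∈ ℝ^{2×2}. Suppose y : ℝ → ℝ² is differentiable and satisfies y'(t) = ε J₂ tanh(y(t)) for all t ∈ ℝ, where tanh is applied entrywise (equivalently, y₁'(t) = −ε tanh(y₂(t)) and y₂'(t) = ε tanh(y₁(t))). Then y is periodic: there exists P > 0 such that y(t + P) = y(t) for all t ∈ ℝ. -/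
/-!
The Hamiltonian `H y = log cosh y₁ + log cosh y₂` is conserved, is invariant under the quarter
turn `J₂`, and the vector field commutes with `J₂` because `tanh` is odd. A nonzero level set of
`H` is bounded and avoids the origin, and on it the angular velocity
`ε ⟨y, tanh y⟩ / |y|² ≥ ε H / |y|²` of `z = y₁ + i y₂` is bounded below by a positive constant.
Writing `z t = z 0 * exp (∫₀ᵗ z'/z)`, the argument of `z` therefore reaches `π / 2` at some
`T > 0`, where `y T = r • J₂ (y 0)` with `r > 0`. As `r ↦ H (r • v)` is strictly increasing,
conservation forces `r = 1`, and uniqueness of solutions gives `y (t + T) = J₂ (y t)`, so `4 T` is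
a period. Swapping the coordinates turns `ε` into `-ε`, and for `ε = 0` or `y 0 = 0` the solution
is constant.
-/

open Real

theorem Prod.ne_zero_iff {M N : Type*} [Zero M] [Zero N] {x : M × N} :
    x ≠ 0 ↔ x.1 ≠ 0 ∨ x.2 ≠ 0 := by
  rw [Ne, Prod.ext_iff, not_and_or, Prod.fst_zero, Prod.snd_zero]

theorem HasDerivAt.fst {𝕜 E F : Type*} [NontriviallyNormedField 𝕜] [NormedAddCommGroup E]
    [NormedSpace 𝕜 E] [NormedAddCommGroup F] [NormedSpace 𝕜 F] {f : 𝕜 → E × F} {f' : E × F}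
    {x : 𝕜} (h : HasDerivAt f f' x) : HasDerivAt (fun x => (f x).1) f'.1 x :=
  hasFDerivAt_fst.comp_hasDerivAt (f := f) x h

theorem HasDerivAt.snd {𝕜 E F : Type*} [NontriviallyNormedField 𝕜] [NormedAddCommGroup E]
    [NormedSpace 𝕜 E] [NormedAddCommGroup F] [NormedSpace 𝕜 F] {f : 𝕜 → E × F} {f' : E × F}
    {x : 𝕜} (h : HasDerivAt f f' x) : HasDerivAt (fun x => (f x).2) f'.2 x :=
  hasFDerivAt_snd.comp_hasDerivAt (f := f) x h

namespace Real

theorem hasDerivAt_tanh (x : ℝ) : HasDerivAt tanh (cosh x ^ 2)⁻¹ x := by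
  have h := (hasDerivAt_sinh x).div (hasDerivAt_cosh x) (cosh_pos x).ne'
  have hpyth : cosh x * cosh x - sinh x * sinh x = 1 := by
    linear_combination cosh_sq_sub_sinh_sq x
  rwa [show sinh / cosh = tanh from funext fun y => (tanh_eq_sinh_div_cosh y).symm, hpyth,
    one_div] at h

theorem lipschitzWith_one_tanh : LipschitzWith 1 tanh := by
  refine lipschitzWith_of_nnnorm_deriv_le (fun x => (hasDerivAt_tanh x).differentiableAt)
    fun x => ?_
  rw [(hasDerivAt_tanh x).deriv, ← NNReal.coe_le_coe, coe_nnnorm, Real.norm_eq_abs,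
    abs_of_pos (by positivity), NNReal.coe_one]
  exact inv_le_one_of_one_le₀ (one_le_pow₀ (one_le_cosh x))

theorem monotone_tanh : Monotone tanh :=
  monotone_of_hasDerivAt_nonneg hasDerivAt_tanh fun x => by positivity

theorem hasDerivAt_log_cosh (x : ℝ) : HasDerivAt (fun x => log (cosh x)) (tanh x) x := by
  simpa [tanh_eq_sinh_div_cosh] using (hasDerivAt_cosh x).log (cosh_pos x).ne'

theorem convexOn_log_cosh : ConvexOn ℝ Set.univ fun x => log (cosh x) := by
  refine Monotone.convexOn_univ_of_deriv (fun x => (hasDerivAt_log_cosh x).differentiableAt) ?_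
  rw [show deriv (fun x => log (cosh x)) = tanh from funext fun x => (hasDerivAt_log_cosh x).deriv]
  exact monotone_tanh

theorem log_cosh_le_mul_tanh (x : ℝ) : log (cosh x) ≤ x * tanh x := by
  rcases lt_trichotomy x 0 with hx | rfl | hx
  · have := convexOn_log_cosh.le_slope_of_hasDerivAt trivial trivial hx (hasDerivAt_log_cosh x)
    rw [slope_def_field, cosh_zero, log_one, le_div_iff₀ (by linarith)] at this
    linarith
  · simp
  · have := convexOn_log_cosh.slope_le_of_hasDerivAt trivial trivial hx (hasDerivAt_log_cosh x)
    rw [slope_def_field, cosh_zero, log_one, div_le_iff₀ (by linarith)] at this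
    linarith

theorem abs_le_log_cosh_add_log_two (x : ℝ) : |x| ≤ log (cosh x) + log 2 := by
  have : exp |x| ≤ 2 * cosh x := by
    rw [← cosh_abs, cosh_eq]
    linarith [exp_pos (-|x|)]
  calc |x| = log (exp |x|) := (log_exp _).symm
    _ ≤ log (2 * cosh x) := log_le_log (exp_pos _) this
    _ = log (cosh x) + log 2 := by rw [log_mul two_ne_zero (cosh_pos x).ne', add_comm]

end Real

namespace Complex

theorem eq_mul_cexp_sub_of_hasDerivAt {z z' F : ℝ → ℂ} (hz : ∀ t, HasDerivAt z (z' t) t)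
    (hne : ∀ t, z t ≠ 0) (hF : ∀ t, HasDerivAt F (z' t / z t) t) (t : ℝ) :
    z t = z 0 * exp (F t - F 0) := by
  have hconst : ∀ t, HasDerivAt (fun t => z t * exp (-F t)) 0 t := fun t => by
    refine ((hz t).mul (hF t).neg.cexp).congr_deriv ?_
    field_simp [hne t]
    ring
  have h := is_const_of_deriv_eq_zero (fun s => (hconst s).differentiableAt)
    (fun s => (hconst s).deriv) t 0
  calc z t = z t * exp (-F t) * exp (F t) := by
        rw [mul_assoc, ← exp_add, neg_add_cancel, exp_zero, mul_one]
    _ = z 0 * exp (F t - F 0) := by rw [h, mul_assoc, ← exp_add]; ring_nf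

theorem exists_pos_eq_ofReal_mul_I_mul {z z' : ℝ → ℂ} {δ : ℝ} (hδ : 0 < δ)
    (hz : ∀ t, HasDerivAt z (z' t) t) (hz' : Continuous z') (hne : ∀ t, z t ≠ 0)
    (hspeed : ∀ t, δ ≤ (z' t / z t).im) :
    ∃ T > 0, ∃ r > (0 : ℝ), z T = r * I * z 0 := by
  have hq : Continuous fun t => z' t / z t :=
    hz'.div (continuous_iff_continuousAt.2 fun t => (hz t).continuousAt) hne
  set F : ℝ → ℂ := fun t => ∫ s in (0 : ℝ)..t, z' s / z s
  have hF : ∀ t, HasDerivAt F (z' t / z t) t := fun t =>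
    (hq.integral_hasStrictDerivAt 0 t).hasDerivAt
  have hF0 : F 0 = 0 := intervalIntegral.integral_same
  -- `(F t).im` is a continuous branch of `arg (z t) - arg (z 0)`.
  have harg : ∀ t, HasDerivAt (fun t => (F t).im) (z' t / z t).im t := fun t =>
    imCLM.hasFDerivAt.comp_hasDerivAt t (hF t)
  have hmono : Monotone fun t => (F t).im - δ * t :=
    monotone_of_hasDerivAt_nonneg (fun t => (harg t).sub ((hasDerivAt_id t).const_mul δ))
      fun t => by simpa using hspeed t
  obtain ⟨T, hT⟩ : π / 2 ∈ Set.range fun t => (F t).im := by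
    refine intermediate_value_univ 0 (π / 2 / δ)
      (continuous_iff_continuousAt.2 fun t => (harg t).continuousAt) ⟨?_, ?_⟩
    · simp only [hF0, zero_im]; positivity
    · have := hmono (show 0 ≤ π / 2 / δ by positivity)
      simp only [hF0, zero_im, mul_zero, sub_zero, mul_div_cancel₀ _ hδ.ne'] at this
      linarith
  have hTpos : 0 < T := by
    by_contra! hT0
    have := hmono hT0
    simp only [hT, hF0, zero_im, mul_zero, sub_zero] at this
    nlinarith [pi_pos]
  refine ⟨T, hTpos, Real.exp (F T).re, Real.exp_pos _, ?_⟩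
  rw [eq_mul_cexp_sub_of_hasDerivAt hz hne hF T, hF0, sub_zero, exp_eq_exp_re_mul_sin_add_cos,
    show (F T).im = π / 2 from hT, ← ofReal_cos, ← ofReal_sin, Real.cos_pi_div_two,
    Real.sin_pi_div_two, ofReal_exp]
  push_cast
  ring

end Complex

namespace TanhHNN

-- `vectorField ε v = ε J₂ tanh v`, and `rotate` is `J₂ = [[0, -1], [1, 0]]`.
noncomputable def vectorField (ε : ℝ) (v : ℝ × ℝ) : ℝ × ℝ := (-(ε * tanh v.2), ε * tanh v.1)

def rotate (v : ℝ × ℝ) : ℝ × ℝ := (-v.2, v.1)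

noncomputable def hamiltonian (v : ℝ × ℝ) : ℝ := log (cosh v.1) + log (cosh v.2)

theorem lipschitzWith_vectorField (ε : ℝ) : LipschitzWith ‖ε‖₊ (vectorField ε) := by
  have h₁ : LipschitzWith (‖-ε‖₊ * (1 * 1)) fun v : ℝ × ℝ => -ε * tanh v.2 :=
    (lipschitzWith_smul (-ε)).comp (lipschitzWith_one_tanh.comp LipschitzWith.prod_snd)
  have h₂ : LipschitzWith (‖ε‖₊ * (1 * 1)) fun v : ℝ × ℝ => ε * tanh v.1 :=
    (lipschitzWith_smul ε).comp (lipschitzWith_one_tanh.comp LipschitzWith.prod_fst)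
  have h := h₁.prodMk h₂
  simp only [nnnorm_neg, mul_one, max_self, neg_mul] at h
  exact h

theorem vectorField_rotate (ε : ℝ) (v : ℝ × ℝ) :
    vectorField ε (rotate v) = rotate (vectorField ε v) := by
  simp [vectorField, rotate, tanh_neg]

theorem vectorField_swap (ε : ℝ) (v : ℝ × ℝ) :
    vectorField (-ε) v.swap = (vectorField ε v).swap := by
  simp [vectorField]

theorem rotate_ne_zero {v : ℝ × ℝ} (hv : v ≠ 0) : rotate v ≠ 0 := by
  contrapose! hv
  simp_all [rotate, Prod.ext_iff]

theorem hamiltonian_rotate (v : ℝ × ℝ) : hamiltonian (rotate v) = hamiltonian v := by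
  simp [hamiltonian, rotate, add_comm]

theorem hamiltonian_zero : hamiltonian 0 = 0 := by
  simp [hamiltonian]

theorem hamiltonian_pos {v : ℝ × ℝ} (hv : v ≠ 0) : 0 < hamiltonian v := by
  have h₁ := log_nonneg (one_le_cosh v.1)
  have h₂ := log_nonneg (one_le_cosh v.2)
  rw [hamiltonian]
  rcases Prod.ne_zero_iff.mp hv with h | h
  · linarith [log_pos (one_lt_cosh.mpr h)]
  · linarith [log_pos (one_lt_cosh.mpr h)]

theorem strictMonoOn_hamiltonian_smul {v : ℝ × ℝ} (hv : v ≠ 0) :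
    StrictMonoOn (fun r : ℝ => hamiltonian (r • v)) (Set.Ici 0) := by
  intro r (hr : 0 ≤ r) s (hs : 0 ≤ s) hrs
  have hmono : ∀ x : ℝ, log (cosh (r * x)) ≤ log (cosh (s * x)) := fun x =>
    log_le_log (cosh_pos _) (cosh_le_cosh.mpr (by
      rw [abs_mul, abs_mul, abs_of_nonneg hr, abs_of_nonneg hs]
      exact mul_le_mul_of_nonneg_right hrs.le (abs_nonneg x)))
  have hstrict : ∀ x : ℝ, x ≠ 0 → log (cosh (r * x)) < log (cosh (s * x)) := fun x hx =>
    log_lt_log (cosh_pos _) (cosh_lt_cosh.mpr (by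
      rw [abs_mul, abs_mul, abs_of_nonneg hr, abs_of_nonneg hs]
      exact mul_lt_mul_of_pos_right hrs (abs_pos.mpr hx)))
  simp only [hamiltonian, Prod.smul_fst, Prod.smul_snd, smul_eq_mul]
  rcases Prod.ne_zero_iff.mp hv with h | h
  · linarith [hstrict _ h, hmono v.2]
  · linarith [hstrict _ h, hmono v.1]

theorem hamiltonian_le_mul_tanh (v : ℝ × ℝ) :
    hamiltonian v ≤ v.1 * tanh v.1 + v.2 * tanh v.2 :=
  add_le_add (log_cosh_le_mul_tanh v.1) (log_cosh_le_mul_tanh v.2)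

theorem sq_add_sq_le_hamiltonian (v : ℝ × ℝ) :
    v.1 ^ 2 + v.2 ^ 2 ≤ 2 * (hamiltonian v + log 2) ^ 2 := by
  have hcoord : ∀ x x' : ℝ, x ^ 2 ≤ (log (cosh x) + log (cosh x') + log 2) ^ 2 := fun x x' => by
    rw [← sq_abs x]
    have := abs_le_log_cosh_add_log_two x
    have := log_nonneg (one_le_cosh x')
    gcongr
    linarith
  have h₁ := hcoord v.1 v.2
  have h₂ := hcoord v.2 v.1
  rw [add_comm (log (cosh v.2))] at h₂
  rw [hamiltonian]
  linarith

theorem im_vectorField_div (ε : ℝ) (v : ℝ × ℝ) :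
    (Complex.equivRealProdCLM.symm (vectorField ε v) / Complex.equivRealProdCLM.symm v).im
      = ε * (v.1 * tanh v.1 + v.2 * tanh v.2) / (v.1 ^ 2 + v.2 ^ 2) := by
  simp only [vectorField, Complex.div_im, Complex.equivRealProdCLM_symm_apply_im,
    Complex.equivRealProdCLM_symm_apply_re, Complex.normSq_apply, neg_mul]
  ring

theorem le_im_vectorField_div {ε : ℝ} (hε : 0 ≤ ε) {v : ℝ × ℝ} (hv : v ≠ 0) :
    ε * hamiltonian v / (2 * (hamiltonian v + log 2) ^ 2) ≤
      (Complex.equivRealProdCLM.symm (vectorField ε v) / Complex.equivRealProdCLM.symm v).im := by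
  have hH := hamiltonian_pos hv
  have hv2 : 0 < v.1 ^ 2 + v.2 ^ 2 := by
    rcases Prod.ne_zero_iff.mp hv with h | h
    · exact add_pos_of_pos_of_nonneg (sq_pos_iff.mpr h) (sq_nonneg _)
    · exact add_pos_of_nonneg_of_pos (sq_nonneg _) (sq_pos_iff.mpr h)
  rw [im_vectorField_div]
  exact div_le_div₀ (mul_nonneg hε (hH.le.trans (hamiltonian_le_mul_tanh v)))
    (mul_le_mul_of_nonneg_left (hamiltonian_le_mul_tanh v) hε) hv2 (sq_add_sq_le_hamiltonian v)

section Solution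

variable {ε : ℝ} {y : ℝ → ℝ × ℝ}

theorem hamiltonian_eq_of_hasDerivAt (hy : ∀ t, HasDerivAt y (vectorField ε (y t)) t) (t : ℝ) :
    hamiltonian (y t) = hamiltonian (y 0) := by
  have hH : ∀ t, HasDerivAt (fun t => hamiltonian (y t)) 0 t := fun t => by
    refine (((hasDerivAt_log_cosh _).comp t (hy t).fst).add
      ((hasDerivAt_log_cosh _).comp t (hy t).snd)).congr_deriv ?_
    simp only [vectorField]
    ring
  exact is_const_of_deriv_eq_zero (fun s => (hH s).differentiableAt) (fun s => (hH s).deriv) t 0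

theorem eq_of_hasDerivAt_vectorField {f g : ℝ → ℝ × ℝ}
    (hf : ∀ t, HasDerivAt f (vectorField ε (f t)) t)
    (hg : ∀ t, HasDerivAt g (vectorField ε (g t)) t) (h0 : f 0 = g 0) : f = g :=
  ODE_solution_unique_univ (v := fun _ => vectorField ε) (s := fun _ => Set.univ)
    (fun _ => (lipschitzWith_vectorField ε).lipschitzOnWith) (fun t => ⟨hf t, trivial⟩)
    (fun t => ⟨hg t, trivial⟩) h0

theorem exists_add_eq_rotate (hε : 0 < ε) (hy : ∀ t, HasDerivAt y (vectorField ε (y t)) t)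
    (h0 : y 0 ≠ 0) : ∃ T > 0, ∀ t, y (t + T) = rotate (y t) := by
  have hcons := hamiltonian_eq_of_hasDerivAt hy
  set H := hamiltonian (y 0)
  have hH : 0 < H := hamiltonian_pos h0
  have hne : ∀ t, y t ≠ 0 := fun t ht => hH.ne' (by rw [← hcons t, ht, hamiltonian_zero])
  have hcont : Continuous y := continuous_iff_continuousAt.2 fun t => (hy t).continuousAt
  set e := Complex.equivRealProdCLM.symm
  obtain ⟨T, hT, r, hr, hzT⟩ := Complex.exists_pos_eq_ofReal_mul_I_mul
    (z := fun t => e (y t)) (z' := fun t => e (vectorField ε (y t)))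
    (δ := ε * H / (2 * (H + log 2) ^ 2)) (by positivity)
    (fun t => e.hasFDerivAt.comp_hasDerivAt t (hy t))
    (e.continuous.comp ((lipschitzWith_vectorField ε).continuous.comp hcont))
    (fun t => by simpa using hne t)
    (fun t => by simpa only [hcons t] using le_im_vectorField_div hε.le (hne t))
  have hyT : y T = r • rotate (y 0) := by
    apply e.injective
    simp only [e, hzT, Complex.equivRealProdCLM_symm_apply, rotate, Prod.smul_fst, Prod.smul_snd,
      smul_eq_mul]
    push_cast
    linear_combination (r * (y 0).2 : ℂ) * Complex.I_sq
  have hr1 : r = 1 := (strictMonoOn_hamiltonian_smul (rotate_ne_zero h0)).injOn hr.le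
    (Set.mem_Ici.2 zero_le_one) (by simp only [← hyT, one_smul, hamiltonian_rotate, hcons])
  refine ⟨T, hT, fun t => congrFun (eq_of_hasDerivAt_vectorField (f := fun t => y (t + T))
    (g := fun t => rotate (y t)) (fun t => (hy (t + T)).comp_add_const t T) (fun t => ?_) ?_) t⟩
  · rw [vectorField_rotate]
    exact (hy t).snd.neg.prodMk (hy t).fst
  · simpa [hr1] using hyT

theorem exists_periodic_of_pos (hε : 0 < ε) (hy : ∀ t, HasDerivAt y (vectorField ε (y t)) t) :
    ∃ P > 0, ∀ t, y (t + P) = y t := by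
  by_cases h0 : y 0 = 0
  · have hzero : ∀ t, y t = 0 := fun t => by
      by_contra ht
      exact (hamiltonian_pos ht).ne'
        (by rw [hamiltonian_eq_of_hasDerivAt hy, h0, hamiltonian_zero])
    exact ⟨1, one_pos, fun t => by rw [hzero, hzero]⟩
  · obtain ⟨T, hT, hrot⟩ := exists_add_eq_rotate hε hy h0
    refine ⟨T + T + T + T, by positivity, fun t => ?_⟩
    rw [← add_assoc, ← add_assoc, ← add_assoc, hrot, hrot, hrot, hrot]
    simp [rotate]

end Solution

end TanhHNN

open TanhHNN

/-- solutions of the planar Hamiltonian system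
`y₁' = -ε tanh(y₂)`, `y₂' = ε tanh(y₁)` are periodic. -/
theorem stmt_6 (ε : ℝ) (y : ℝ → ℝ × ℝ)
    (h1 : ∀ t : ℝ, HasDerivAt (fun s => (y s).1) (-ε * Real.tanh (y t).2) t)
    (h2 : ∀ t : ℝ, HasDerivAt (fun s => (y s).2) (ε * Real.tanh (y t).1) t) :
    ∃ P > (0 : ℝ), ∀ t : ℝ, y (t + P) = y t := by
  have hy : ∀ t, HasDerivAt y (vectorField ε (y t)) t := fun t => by
    simpa only [vectorField, neg_mul] using (h1 t).prodMk (h2 t)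
  rcases lt_trichotomy ε 0 with hε | rfl | hε
  · have hswap : ∀ t, HasDerivAt (fun t => (y t).swap) (vectorField (-ε) (y t).swap) t :=
      fun t => by rw [vectorField_swap]; exact (hy t).snd.prodMk (hy t).fst
    obtain ⟨P, hP, hper⟩ := exists_periodic_of_pos (neg_pos.2 hε) hswap
    exact ⟨P, hP, fun t => Prod.swap_injective (hper t)⟩
  · have hconst : ∀ t, HasDerivAt y 0 t := fun t => by
      simpa [vectorField, ← Prod.mk_zero_zero] using hy t
    exact ⟨1, one_pos, fun t => is_const_of_deriv_eq_zero (fun s => (hconst s).differentiableAt)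
      (fun s => (hconst s).deriv) (t + 1) t⟩
  · exact exists_periodic_of_pos hε hy
end

section
/- Let n, M be positive integers, let p : {1,…,n} → {1,…,M} assign each feature index to a node, and let R, T, S ⊆ {1,…,M} × {1,…,M} be relations with T symmetric ((a,b) ∈ T iff (b,a) ∈ T). Let K, J ∈ ℝ^{n×n} and let D ∈ ℝ^{n×n} be diagonal. Assume: (i) K_{ij} ≠ 0 implies (p(i), p(j)) ∈ R; (ii) J_{ij} ≠ 0 implies (p(i), p(j)) ∈ T; (iii) for all a, b, c, d ∈ {1,…,M}, if (a,b) ∈ T, (c,b) ∈ R, and (c,d) ∈ R, then (a,d) ∈ S; and (iv) for all a, b, c, d ∈ {1,…,M}, if (b,a) ∈ R, (b,c) ∈ R, and (c,d) ∈ T, then (a,d) ∈ S. Then both the forward-sensitivity matrix J Kᵀ D K and the backward-sensitivity matrix Kᵀ D K Jᵀ respect the communication graph S: (J Kᵀ D K)_{ij} ≠ 0 implies (p(i), p(j)) ∈ S, and (Kᵀ D K Jᵀ)_{ij} ≠ 0 implies (p(i), p(j)) ∈ S. -/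
open Matrix

/-- sparsity of forward and backward sensitivity matrices of a distributed
Hamiltonian DNN: if `K ∈ BlkSprs(R)`, `J ∈ BlkSprs(T)` and the relations satisfy the
conditions encoding `T Rᵀ R + Rᵀ R T ≤ S`, then `J Kᵀ D K` and `Kᵀ D K Jᵀ` respect `S`. -/
theorem stmt_13 {n M : ℕ} (hn : 0 < n) (hM : 0 < M) (p : Fin n → Fin M)
    (R T S : Fin M → Fin M → Prop)
    (hTsym : ∀ a b, T a b ↔ T b a)
    (K J D : Matrix (Fin n) (Fin n) ℝ) (d : Fin n → ℝ) (hD : D = Matrix.diagonal d)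
    (hK : ∀ i j, K i j ≠ 0 → R (p i) (p j))
    (hJ : ∀ i j, J i j ≠ 0 → T (p i) (p j))
    (hiii : ∀ a b c dd : Fin M, T a b → R c b → R c dd → S a dd)
    (hiv : ∀ a b c dd : Fin M, R b a → R b c → T c dd → S a dd) :
    (∀ i j, (J * Kᵀ * D * K) i j ≠ 0 → S (p i) (p j)) ∧
      (∀ i j, (Kᵀ * D * K * Jᵀ) i j ≠ 0 → S (p i) (p j)) := by
  subst hD
  constructor
  · intro i j h
    simp only [Matrix.mul_apply, Matrix.transpose_apply] at h
    obtain ⟨c, -, hc⟩ := Finset.exists_ne_zero_of_sum_ne_zero h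
    obtain ⟨hc1, hc2⟩ := mul_ne_zero_iff.mp hc
    obtain ⟨b, -, hb⟩ := Finset.exists_ne_zero_of_sum_ne_zero hc1
    obtain ⟨hb1, hb2⟩ := mul_ne_zero_iff.mp hb
    have hbc : b = c := by
      by_contra hne
      exact hb2 (Matrix.diagonal_apply_ne d hne)
    subst hbc
    obtain ⟨a, -, ha⟩ := Finset.exists_ne_zero_of_sum_ne_zero hb1
    obtain ⟨h1, h2⟩ := mul_ne_zero_iff.mp ha
    exact hiii _ (p a) (p b) _ (hJ i a h1) (hK b a h2) (hK b j hc2)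
  · intro i j h
    simp only [Matrix.mul_apply, Matrix.transpose_apply] at h
    obtain ⟨c, -, hc⟩ := Finset.exists_ne_zero_of_sum_ne_zero h
    obtain ⟨hc1, hc2⟩ := mul_ne_zero_iff.mp hc
    obtain ⟨b, -, hb⟩ := Finset.exists_ne_zero_of_sum_ne_zero hc1
    obtain ⟨hb1, hb2⟩ := mul_ne_zero_iff.mp hb
    obtain ⟨a, -, ha⟩ := Finset.exists_ne_zero_of_sum_ne_zero hb1
    obtain ⟨h1, h2⟩ := mul_ne_zero_iff.mp ha
    have hab : a = b := by
      by_contra hne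
      exact h2 (Matrix.diagonal_apply_ne d hne)
    subst hab
    exact hiv _ (p a) (p c) _ (hK a i h1) (hK a c hb2) ((hTsym _ _).mp (hJ j c hc2))
end

section
/- Let m be a positive integer, h ∈ ℝ, X ∈ ℝ^{m×m}, and let H_pp, H_qq ∈ ℝ^{m×m} be symmetric and H_pq ∈ ℝ^{m×m} arbitrary, with H_qp := H_pqᵀ. Define the 2m×2m matrices J = [[0, −Xᵀ], [X, 0]], Γ = I_{2m} − h [[H_pp, H_qp], [0, 0]] Jᵀ, and Λ = I_{2m} + h [[0, 0], [H_pq, H_qq]] Jᵀ (in 2×2 block notation with m×m blocks). Then Λᵀ J Λ = Γᵀ J Γ. -/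
open Matrix

/-- the key algebraic identity `Λᵀ J Λ = Γᵀ J Γ` behind the symplecticity of
the one-step sensitivity matrices of the semi-implicit Euler discretization. -/
theorem stmt_14 {m : ℕ} (hm : 0 < m) (h : ℝ) (X : Matrix (Fin m) (Fin m) ℝ)
    (Hpp Hqq Hpq Hqp : Matrix (Fin m) (Fin m) ℝ)
    (hHpp : Hppᵀ = Hpp) (hHqq : Hqqᵀ = Hqq) (hHqp : Hqp = Hpqᵀ)
    (J Γ Λ : Matrix (Fin m ⊕ Fin m) (Fin m ⊕ Fin m) ℝ)
    (hJ : J = Matrix.fromBlocks 0 (-Xᵀ) X 0)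
    (hΓ : Γ = 1 - h • (Matrix.fromBlocks Hpp Hqp 0 0 * Jᵀ))
    (hΛ : Λ = 1 + h • (Matrix.fromBlocks 0 0 Hpq Hqq * Jᵀ)) :
    Λᵀ * J * Λ = Γᵀ * J * Γ := by
  subst hJ hΓ hΛ hHqp
  rw [← Matrix.fromBlocks_one]
  simp only [sub_eq_add_neg, Matrix.fromBlocks_transpose, Matrix.fromBlocks_multiply,
    transpose_neg, transpose_zero, transpose_transpose, transpose_one,
    Matrix.fromBlocks_smul, Matrix.fromBlocks_neg, Matrix.fromBlocks_add,
    Matrix.transpose_add, Matrix.transpose_smul, Matrix.transpose_mul, hHpp, hHqq]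
  congr 1 <;> simp [smul_smul, Matrix.mul_smul, Matrix.smul_mul, mul_add, add_mul,
    Matrix.mul_assoc] <;> first | noncomm_ring | abel
end

section
/- Let m be a positive integer, h ∈ ℝ, X ∈ ℝ^{m×m}, and let H_pp, H_qq ∈ ℝ^{m×m} be symmetric and H_pq ∈ ℝ^{m×m} arbitrary, with H_qp := H_pqᵀ. Define the 2m×2m matrices J = [[0, −Xᵀ], [X, 0]], Γ = I_{2m} − h [[H_pp, H_qp], [0, 0]] Jᵀ, and Λ = I_{2m} + h [[0, 0], [H_pq, H_qq]] Jᵀ (in 2×2 block notation with m×m blocks). If Γ is invertible and M ∈ ℝ^{2m×2m} satisfies M Γ = Λ, then Mᵀ J M = J, i.e. M is symplectic with respect to J. -/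
open Matrix

/-- the one-step sensitivity matrix `M = Λ Γ⁻¹` of the semi-implicit Euler
discretization of a time-varying Hamiltonian system is symplectic with respect to `J`. -/
theorem stmt_15 {m : ℕ} (hm : 0 < m) (h : ℝ) (X : Matrix (Fin m) (Fin m) ℝ)
    (Hpp Hqq Hpq Hqp : Matrix (Fin m) (Fin m) ℝ)
    (hHpp : Hppᵀ = Hpp) (hHqq : Hqqᵀ = Hqq) (hHqp : Hqp = Hpqᵀ)
    (J Γ Λ : Matrix (Fin m ⊕ Fin m) (Fin m ⊕ Fin m) ℝ)
    (hJ : J = Matrix.fromBlocks 0 (-Xᵀ) X 0)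
    (hΓ : Γ = 1 - h • (Matrix.fromBlocks Hpp Hqp 0 0 * Jᵀ))
    (hΛ : Λ = 1 + h • (Matrix.fromBlocks 0 0 Hpq Hqq * Jᵀ))
    (hΓunit : IsUnit Γ)
    (M : Matrix (Fin m ⊕ Fin m) (Fin m ⊕ Fin m) ℝ) (hM : M * Γ = Λ) :
    Mᵀ * J * M = J := by
  set A := Matrix.fromBlocks Hpp Hqp (0 : Matrix (Fin m) (Fin m) ℝ) 0 with hA
  set B := Matrix.fromBlocks (0 : Matrix (Fin m) (Fin m) ℝ) 0 Hpq Hqq with hB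
  have hJT : Jᵀ = -J := by
    simp [hJ, Matrix.fromBlocks_transpose]
    ext (i|i) (j|j) <;> simp [Matrix.fromBlocks]
  have hA0 : Aᵀ * J * A = 0 := by
    simp [hA, hJ, Matrix.fromBlocks_transpose, Matrix.fromBlocks_multiply]
  have hB0 : Bᵀ * J * B = 0 := by
    simp [hB, hJ, Matrix.fromBlocks_transpose, Matrix.fromBlocks_multiply]
  have hAB : A - Aᵀ = Bᵀ - B := by
    simp [hA, hB, Matrix.fromBlocks_transpose, hHpp, hHqq, hHqp]
    ext (i|i) (j|j) <;> simp [Matrix.fromBlocks]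
  have hΓ' : Γ = 1 + h • (A * J) := by rw [hΓ, hJT]; simp
  have hΛ' : Λ = 1 + (-h) • (B * J) := by rw [hΛ, hJT]; simp
  have expand : ∀ (C : Matrix (Fin m ⊕ Fin m) (Fin m ⊕ Fin m) ℝ) (s : ℝ),
      (1 + s • (C * J))ᵀ * J * (1 + s • (C * J))
        = J + s • (J * (C - Cᵀ) * J) - (s * s) • (J * (Cᵀ * J * C) * J) := by
    intro C s
    simp only [transpose_add, transpose_one, transpose_smul, transpose_mul, hJT, neg_mul,
      mul_neg, smul_neg, add_mul, mul_add, sub_mul, mul_sub, one_mul, mul_one,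
      smul_mul_assoc, mul_smul_comm, smul_smul, smul_sub, smul_add, mul_assoc]
    abel
  have key : Λᵀ * J * Λ = Γᵀ * J * Γ := by
    rw [hΓ', hΛ', expand, expand, hA0, hB0]
    have e : B - Bᵀ = -(A - Aᵀ) := by rw [hAB]; abel
    rw [e]
    simp only [mul_neg, neg_mul, smul_neg, neg_neg, sub_neg_eq_add]
    rw [neg_smul, neg_neg]
  have key2 : Γᵀ * (Mᵀ * J * M) * Γ = Γᵀ * J * Γ := by
    calc Γᵀ * (Mᵀ * J * M) * Γ = (M * Γ)ᵀ * J * (M * Γ) := by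
          simp [transpose_mul, mul_assoc]
      _ = Λᵀ * J * Λ := by rw [hM]
      _ = Γᵀ * J * Γ := key
  have hdet : IsUnit Γ.det := (Matrix.isUnit_iff_isUnit_det Γ).mp hΓunit
  have hdetT : IsUnit Γᵀ.det := by simpa using hdet
  have cancel : ∀ N : Matrix (Fin m ⊕ Fin m) (Fin m ⊕ Fin m) ℝ,
      Γᵀ⁻¹ * (Γᵀ * N * Γ) * Γ⁻¹ = N := by
    intro N
    rw [show Γᵀ * N * Γ = Γᵀ * (N * Γ) from by rw [mul_assoc],
      Matrix.nonsing_inv_mul_cancel_left _ _ hdetT,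
      Matrix.mul_nonsing_inv_cancel_right _ _ hdet]
  rw [← cancel (Mᵀ * J * M), key2, cancel]
end

section
/- Let J ∈ ℝ^{n×n} be skew-symmetric with J ≠ 0, and let M₁, …, M_N ∈ ℝ^{n×n} each satisfy M_jᵀ J M_j = J for j = 1, …, N. Then for any norm ‖·‖ on real n×n matrices that is sub-multiplicative (‖AB‖ ≤ ‖A‖·‖B‖) and transpose-invariant (‖Aᵀ‖ = ‖A‖), and for every 1 ≤ k ≤ N, the partial product satisfies ‖M_N M_{N−1} ⋯ M_k‖ ≥ 1. -/
open Matrix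

lemma symplectic_list_prod {n : ℕ} (J : Matrix (Fin n) (Fin n) ℝ)
    (l : List (Matrix (Fin n) (Fin n) ℝ))
    (h : ∀ A ∈ l, Aᵀ * J * A = J) : l.prodᵀ * J * l.prod = J := by
  induction l with
  | nil => simp
  | cons A t ih =>
    simp only [List.prod_cons, Matrix.transpose_mul]
    have hA : Aᵀ * J * A = J := h A (by simp)
    have ht := ih (fun B hB => h B (List.mem_cons_of_mem _ hB))
    calc (t.prodᵀ * Aᵀ) * J * (A * t.prod)
        = t.prodᵀ * (Aᵀ * J * A) * t.prod := by simp only [mul_assoc]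
      _ = J := by rw [hA]; exact ht

/-- the partial products `M_N ⋯ M_k` of matrices symplectic with respect to a
nonzero skew-symmetric `J` have norm at least `1` for any sub-multiplicative,
transpose-invariant norm. Here `M 0, …, M (N-1)` play the role of `M₁, …, M_N`, and for
`k : Fin N` the partial product `M_N ⋯ M_{k+1}` is `((List.ofFn M).drop k).reverse.prod`. -/
theorem stmt_17 {n : ℕ} (J : Matrix (Fin n) (Fin n) ℝ) (hJskew : Jᵀ = -J) (hJne : J ≠ 0)
    (Nn : ℕ) (M : Fin Nn → Matrix (Fin n) (Fin n) ℝ)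
    (hM : ∀ j : Fin Nn, (M j)ᵀ * J * M j = J)
    (N : Matrix (Fin n) (Fin n) ℝ → ℝ)
    (hN_nonneg : ∀ A, 0 ≤ N A)
    (hN_def : ∀ A, N A = 0 ↔ A = 0)
    (hN_add : ∀ A B, N (A + B) ≤ N A + N B)
    (hN_smul : ∀ (c : ℝ) A, N (c • A) = |c| * N A)
    (hN_mul : ∀ A B, N (A * B) ≤ N A * N B)
    (hN_transpose : ∀ A, N Aᵀ = N A) :
    ∀ k : Fin Nn, 1 ≤ N (((List.ofFn M).drop k).reverse.prod) := by
  intro k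
  set P := ((List.ofFn M).drop k).reverse.prod with hP
  have hsymp : Pᵀ * J * P = J := by
    apply symplectic_list_prod
    intro A hA
    rw [List.mem_reverse] at hA
    have := List.mem_of_mem_drop hA
    rw [List.mem_ofFn] at this
    obtain ⟨j, rfl⟩ := this
    exact hM j
  have hJpos : 0 < N J := by
    rcases lt_or_eq_of_le (hN_nonneg J) with h | h
    · exact h
    · exact absurd ((hN_def J).mp h.symm) hJne
  have h1 : N J ≤ N P * N J * N P := by
    calc N J = N (Pᵀ * J * P) := by rw [hsymp]
      _ ≤ N (Pᵀ * J) * N P := hN_mul _ _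
      _ ≤ N Pᵀ * N J * N P := by
          have := hN_mul Pᵀ J
          nlinarith [hN_nonneg P]
      _ = N P * N J * N P := by rw [hN_transpose]
  nlinarith [hN_nonneg P, hJpos, mul_nonneg (hN_nonneg P) hJpos.le, mul_pos hJpos hJpos]
end

section
/- Let m, M be positive integers, let p : {1,…,m} → {1,…,M} assign each feature index to a node, and let R, T, S ⊆ {1,…,M} × {1,…,M} be relations with T symmetric ((a,b) ∈ T iff (b,a) ∈ T). Let X, K ∈ ℝ^{m×m} and let D ∈ ℝ^{m×m} be diagonal. Assume: (i) X_{ij} ≠ 0 implies (p(i), p(j)) ∈ T; (ii) K_{ij} ≠ 0 implies (p(i), p(j)) ∈ R; and (iii) for all a, b, c, d ∈ {1,…,M}, if (a,b) ∈ T, (c,b) ∈ R, and (c,d) ∈ R, then (a,d) ∈ S. Then (Xᵀ Kᵀ D K)_{ij} ≠ 0 implies (p(i), p(j)) ∈ S. -/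
open Matrix

/-- sparsity of the semi-implicit Euler layer update matrix `Xᵀ Kᵀ D K`
of a distributed Hamiltonian DNN: under the block-sparsity assumptions encoding
`T Rᵀ R ≤ S`, the matrix `Xᵀ Kᵀ D K` respects the communication graph `S`. -/
theorem stmt_19 {m M : ℕ} (hm : 0 < m) (hM : 0 < M) (p : Fin m → Fin M)
    (R T S : Fin M → Fin M → Prop)
    (hTsym : ∀ a b, T a b ↔ T b a)
    (X K D : Matrix (Fin m) (Fin m) ℝ) (d : Fin m → ℝ) (hD : D = Matrix.diagonal d)
    (hX : ∀ i j, X i j ≠ 0 → T (p i) (p j))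
    (hK : ∀ i j, K i j ≠ 0 → R (p i) (p j))
    (hiii : ∀ a b c dd : Fin M, T a b → R c b → R c dd → S a dd) :
    ∀ i j, (Xᵀ * Kᵀ * D * K) i j ≠ 0 → S (p i) (p j) := by
  intro i j h
  simp only [Matrix.mul_apply, Matrix.transpose_apply, hD, Matrix.diagonal_apply] at h
  obtain ⟨l, -, hl⟩ := Finset.exists_ne_zero_of_sum_ne_zero h
  obtain ⟨k, -, hk⟩ := Finset.exists_ne_zero_of_sum_ne_zero (left_ne_zero_of_mul hl)
  obtain ⟨b, -, hb⟩ := Finset.exists_ne_zero_of_sum_ne_zero (left_ne_zero_of_mul hk)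
  have hkl : k = l := by
    by_contra hne
    simp [hne] at hk
  have hXb : X b i ≠ 0 := left_ne_zero_of_mul hb
  have hKb : K k b ≠ 0 := right_ne_zero_of_mul hb
  have hKl : K l j ≠ 0 := right_ne_zero_of_mul hl
  exact hiii _ _ _ _ ((hTsym _ _).mp (hX _ _ hXb)) (hK _ _ hKb) (hK _ _ (hkl ▸ hKl))
end
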